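/- If (c_n) and (d_n) are sequences of nonnegative reals with lim c_n^{1/n} = g > 0 and lim d_n^{1/n} = h > 0, then the binomial convolution e_n = Σ_{k=0}^n (n choose k) c_k d_{n-k} satisfies lim e_n^{1/n} = g + h. -/

import Mathlib

/-!
If `g' > g` and `h' > h`, then `c k ≤ C g'^k` and `d k ≤ D h'^k` for all `k`, and the binomial
theorem gives `e n ≤ C D (g' + h')^n`. Conversely, if `x < g` and `y < h`, then `x^k ≤ c k` and
`y^k ≤ d k` for `k ≥ N`; keeping only the terms of `e (m + 2N)` whose two indices are both at
least `N`, and using `C(m, j) ≤ C(m + 2N, j + N)`, gives `e (m + 2N) ≥ (x y)^N (x + y)^m`.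
Taking `n`-th roots of the two bounds squeezes `e n ^ (1/n)` to `g + h`.
-/

open Filter Topology Finset

/-- Its exponential generating function is the product of those of `c` and `d`. -/
def binomConv (c d : ℕ → ℝ) (n : ℕ) : ℝ :=
  ∑ k ∈ range (n + 1), (n.choose k : ℝ) * c k * d (n - k)

lemma Nat.choose_le_choose_add_add (m j N : ℕ) : m.choose j ≤ (m + N).choose (j + N) := by
  induction N with
  | zero => rfl
  | succ N ih =>
    rw [← add_assoc, ← add_assoc, Nat.choose_succ_succ']
    exact ih.trans (Nat.le_add_right _ _)

namespace binomConv

variable {c d c' d' : ℕ → ℝ}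

lemma nonneg (hc : ∀ k, 0 ≤ c k) (hd : ∀ k, 0 ≤ d k) (n : ℕ) : 0 ≤ binomConv c d n :=
  sum_nonneg fun k _ => by have := hc k; have := hd (n - k); positivity

lemma mono (hc : ∀ k, 0 ≤ c k) (hd : ∀ k, 0 ≤ d k) (hcc : ∀ k, c k ≤ c' k)
    (hdd : ∀ k, d k ≤ d' k) (n : ℕ) : binomConv c d n ≤ binomConv c' d' n :=
  sum_le_sum fun k _ => mul_le_mul (mul_le_mul_of_nonneg_left (hcc k) (by positivity))
    (hdd _) (hd _) (mul_nonneg (by positivity) ((hc k).trans (hcc k)))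

lemma const_mul_pow (C D x y : ℝ) (n : ℕ) :
    binomConv (fun k => C * x ^ k) (fun k => D * y ^ k) n = C * D * (x + y) ^ n := by
  rw [binomConv, add_pow, mul_sum]
  exact sum_congr rfl fun k _ => by ring

lemma shift_le (hc : ∀ k, 0 ≤ c k) (hd : ∀ k, 0 ≤ d k) (N m : ℕ) :
    binomConv (fun k => c (k + N)) (fun k => d (k + N)) m ≤ binomConv c d (m + 2 * N) := by
  have hsub : (range (m + 1)).map (addRightEmbedding N) ⊆ range (m + 2 * N + 1) := by
    intro k hk
    obtain ⟨j, hj, rfl⟩ := Finset.mem_map.1 hk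
    simp only [mem_range, addRightEmbedding_apply] at hj ⊢
    omega
  calc binomConv (fun k => c (k + N)) (fun k => d (k + N)) m
      ≤ ∑ j ∈ range (m + 1),
          ((m + 2 * N).choose (j + N) : ℝ) * c (j + N) * d (m + 2 * N - (j + N)) := by
        refine sum_le_sum fun j hj => ?_
        have hjm : m - j + N = m + 2 * N - (j + N) := by
          have := mem_range.1 hj; omega
        have hchoose : (m.choose j : ℝ) ≤ (m + 2 * N).choose (j + N) := by
          exact_mod_cast (Nat.choose_le_choose_add_add m j N).trans
            (Nat.choose_le_choose _ (by omega))
        simp only [← hjm]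
        exact mul_le_mul_of_nonneg_right (mul_le_mul_of_nonneg_right hchoose (hc _)) (hd _)
    _ = ∑ k ∈ (range (m + 1)).map (addRightEmbedding N),
          ((m + 2 * N).choose k : ℝ) * c k * d (m + 2 * N - k) := by rw [sum_map]; rfl
    _ ≤ binomConv c d (m + 2 * N) :=
        sum_le_sum_of_subset_of_nonneg hsub fun k _ _ => by
          have := hc k; have := hd (m + 2 * N - k); positivity

end binomConv

namespace binomConv

variable {c d : ℕ → ℝ}

lemma le_mul_pow (hc : ∀ k, 0 ≤ c k) (hd : ∀ k, 0 ≤ d k) {C D x y : ℝ}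
    (hcx : ∀ k, c k ≤ C * x ^ k) (hdy : ∀ k, d k ≤ D * y ^ k) (n : ℕ) :
    binomConv c d n ≤ C * D * (x + y) ^ n :=
  (mono hc hd hcx hdy n).trans_eq (const_mul_pow C D x y n)

lemma exists_mul_pow_le (hc : ∀ k, 0 ≤ c k) (hd : ∀ k, 0 ≤ d k) {x y : ℝ} (hx : 0 < x)
    (hy : 0 < y) (hcx : ∀ᶠ k in atTop, x ^ k ≤ c k) (hdy : ∀ᶠ k in atTop, y ^ k ≤ d k) :
    ∃ K > 0, ∀ᶠ n in atTop, K * (x + y) ^ n ≤ binomConv c d n := by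
  obtain ⟨N, hN⟩ := (hcx.and hdy).exists_forall_of_atTop
  refine ⟨(x * y) ^ N / (x + y) ^ (2 * N), by positivity, ?_⟩
  filter_upwards [eventually_ge_atTop (2 * N)] with n hn
  obtain ⟨m, rfl⟩ : ∃ m, n = m + 2 * N := ⟨n - 2 * N, by omega⟩
  calc (x * y) ^ N / (x + y) ^ (2 * N) * (x + y) ^ (m + 2 * N)
      = binomConv (fun k => x ^ N * x ^ k) (fun k => y ^ N * y ^ k) m := by
        rw [const_mul_pow, pow_add]
        field_simp
        ring
    _ ≤ binomConv (fun k => c (k + N)) (fun k => d (k + N)) m := by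
        refine mono (fun _ => by positivity) (fun _ => by positivity) (fun k => ?_) (fun k => ?_) m
        · rw [← pow_add, add_comm]; exact (hN _ (Nat.le_add_left N k)).1
        · rw [← pow_add, add_comm]; exact (hN _ (Nat.le_add_left N k)).2
    _ ≤ binomConv c d (m + 2 * N) := shift_le hc hd N m

end binomConv

section RootGrowth

variable {a : ℕ → ℝ} {g x : ℝ}

lemma eventually_pow_le_of_tendsto_rpow_one_div (ha : ∀ n, 0 ≤ a n)
    (hlim : Tendsto (fun n : ℕ => a n ^ ((1 : ℝ) / n)) atTop (𝓝 g)) (hx : 0 ≤ x) (hxg : x < g) :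
    ∀ᶠ n in atTop, x ^ n ≤ a n := by
  filter_upwards [hlim.eventually_const_lt hxg, eventually_ne_atTop 0] with n hn hn0
  rw [one_div, Real.lt_rpow_inv_iff_of_pos hx (ha n) (by positivity), Real.rpow_natCast] at hn
  exact hn.le

lemma exists_le_mul_pow_of_tendsto_rpow_one_div (ha : ∀ n, 0 ≤ a n)
    (hlim : Tendsto (fun n : ℕ => a n ^ ((1 : ℝ) / n)) atTop (𝓝 g)) (hgx : g < x) :
    ∃ C > 0, ∀ n, a n ≤ C * x ^ n := by
  have hx : 0 < x := (ge_of_tendsto' hlim fun n => Real.rpow_nonneg (ha n) _).trans_lt hgx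
  have hratio : ∀ᶠ n in atTop, a n / x ^ n ≤ 1 := by
    filter_upwards [hlim.eventually_lt_const hgx, eventually_ne_atTop 0] with n hn hn0
    rw [one_div, Real.rpow_inv_lt_iff_of_pos (ha n) hx.le (by positivity), Real.rpow_natCast] at hn
    exact (div_le_one (by positivity)).2 hn.le
  obtain ⟨B, hB⟩ := (isBoundedUnder_of_eventually_le hratio).bddAbove_range
  refine ⟨max B 1, by positivity, fun n => ?_⟩
  have hn : a n / x ^ n ≤ B := hB ⟨n, rfl⟩
  rw [div_le_iff₀ (by positivity)] at hn
  exact hn.trans (mul_le_mul_of_nonneg_right (le_max_left _ _) (by positivity))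

lemma tendsto_const_mul_pow_rpow_one_div {K s : ℝ} (hK : 0 < K) (hs : 0 ≤ s) :
    Tendsto (fun n : ℕ => (K * s ^ n) ^ ((1 : ℝ) / n)) atTop (𝓝 s) := by
  have hK1 : Tendsto (fun n : ℕ => K ^ ((1 : ℝ) / n)) atTop (𝓝 1) := by
    have := (Real.continuousAt_const_rpow hK.ne').tendsto.comp tendsto_one_div_atTop_nhds_zero_nat
    rwa [Real.rpow_zero] at this
  refine (by simpa using hK1.mul_const s : Tendsto _ atTop (𝓝 s)).congr' ?_
  filter_upwards [eventually_ne_atTop 0] with n hn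
  rw [Real.mul_rpow hK.le (by positivity), one_div, Real.pow_rpow_inv_natCast hs hn]

lemma tendsto_rpow_one_div_of_pow_bounds {L : ℝ} (ha : ∀ n, 0 ≤ a n) (hL : 0 < L)
    (hlow : ∀ s, 0 < s → s < L → ∃ K > 0, ∀ᶠ n in atTop, K * s ^ n ≤ a n)
    (hup : ∀ s, L < s → ∃ K > 0, ∀ᶠ n in atTop, a n ≤ K * s ^ n) :
    Tendsto (fun n : ℕ => a n ^ ((1 : ℝ) / n)) atTop (𝓝 L) := by
  refine tendsto_order.2 ⟨fun b hb => ?_, fun b hb => ?_⟩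
  · obtain ⟨s, hbs, hsL⟩ := exists_between (max_lt hb hL)
    obtain ⟨hbs, hs⟩ := max_lt_iff.1 hbs
    obtain ⟨K, hK, hKs⟩ := hlow s hs hsL
    filter_upwards [hKs, (tendsto_const_mul_pow_rpow_one_div hK hs.le).eventually_const_lt hbs]
      with n hn hbn
    exact hbn.trans_le (Real.rpow_le_rpow (by positivity) hn (by positivity))
  · obtain ⟨s, hLs, hsb⟩ := exists_between hb
    obtain ⟨K, hK, hKs⟩ := hup s hLs
    filter_upwards [hKs, (tendsto_const_mul_pow_rpow_one_div hK (by linarith)).eventually_lt_const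
      hsb] with n hn hbn
    exact (Real.rpow_le_rpow (ha n) hn (by positivity)).trans_lt hbn

end RootGrowth

theorem stmt_13 (c d : ℕ → ℝ) (hc0 : ∀ n, 0 ≤ c n) (hd0 : ∀ n, 0 ≤ d n)
    (g h : ℝ) (hg : 0 < g) (hh : 0 < h)
    (hc : Tendsto (fun n : ℕ => c n ^ ((1 : ℝ) / n)) atTop (𝓝 g))
    (hd : Tendsto (fun n : ℕ => d n ^ ((1 : ℝ) / n)) atTop (𝓝 h)) :
    Tendsto (fun n : ℕ =>
        (∑ k ∈ Finset.range (n + 1), (n.choose k : ℝ) * c k * d (n - k)) ^ ((1 : ℝ) / n))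
      atTop (𝓝 (g + h)) := by
  have hgh : 0 < g + h := by positivity
  have hsplit : ∀ s, g * (s / (g + h)) + h * (s / (g + h)) = s := fun s => by field_simp
  refine tendsto_rpow_one_div_of_pow_bounds (binomConv.nonneg hc0 hd0) hgh
    (fun s hs hsL => ?_) (fun s hLs => ?_)
  · have ht : s / (g + h) < 1 := (div_lt_one hgh).2 hsL
    rw [← hsplit s]
    exact binomConv.exists_mul_pow_le hc0 hd0 (by positivity) (by positivity)
      (eventually_pow_le_of_tendsto_rpow_one_div hc0 hc (by positivity) (by nlinarith))
      (eventually_pow_le_of_tendsto_rpow_one_div hd0 hd (by positivity) (by nlinarith))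
  · have ht : 1 < s / (g + h) := (one_lt_div hgh).2 hLs
    obtain ⟨C, hC, hcC⟩ := exists_le_mul_pow_of_tendsto_rpow_one_div hc0 hc
      (by nlinarith : g < g * (s / (g + h)))
    obtain ⟨D, hD, hdD⟩ := exists_le_mul_pow_of_tendsto_rpow_one_div hd0 hd
      (by nlinarith : h < h * (s / (g + h)))
    rw [← hsplit s]
    exact ⟨C * D, by positivity, .of_forall (binomConv.le_mul_pow hc0 hd0 hcC hdD)⟩
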